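/- An A-bounded operator T is A-normaloid (r_A(T) = ‖T‖_A) if and only if ω_A(T) = ‖T‖_A; in that case r_A(T) = ω_A(T) = ‖T‖_A. -/

import Mathlib

open Filter

variable {H : Type*} [NormedAddCommGroup H] [InnerProductSpace ℂ H] [CompleteSpace H]

/-- The seminorm induced by a positive operator `A`: `‖x‖_A = ⟨Ax,x⟩^{1/2}`. -/
noncomputable def anorm (A : H →L[ℂ] H) (x : H) : ℝ :=
  Real.sqrt ((inner ℂ (A x) x : ℂ).re)

/-- `T` is `A`-bounded: there is `c > 0` with `‖Tx‖_A ≤ c‖x‖_A` for all `x`. -/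
def ABounded (A T : H →L[ℂ] H) : Prop :=
  ∃ c > 0, ∀ x : H, anorm A (T x) ≤ c * anorm A x

/-- The `A`-operator seminorm `‖T‖_A = sup{‖Tx‖_A : ‖x‖_A = 1}`. -/
noncomputable def opAnorm (A T : H →L[ℂ] H) : ℝ :=
  sSup {c : ℝ | ∃ x : H, anorm A x = 1 ∧ c = anorm A (T x)}

/-- The `A`-spectral radius `r_A(T) = inf_{n ≥ 1} ‖Tⁿ‖_A^{1/n}`. -/
noncomputable def rA (A T : H →L[ℂ] H) : ℝ :=
  ⨅ n : ℕ+, opAnorm A (T ^ (n : ℕ)) ^ (((n : ℕ) : ℝ)⁻¹)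

/-- The `A`-numerical radius `ω_A(T) = sup{|⟨Tx,x⟩_A| : ‖x‖_A = 1}`. -/
noncomputable def wA (A T : H →L[ℂ] H) : ℝ :=
  sSup {c : ℝ | ∃ x : H, anorm A x = 1 ∧ c = ‖(inner ℂ (A (T x)) x : ℂ)‖}

/-!
Write `A = R²` with `R = √A`; then `‖x‖_A = ‖R x‖` and `⟨Ax, y⟩ = ⟨Rx, Ry⟩`, so Cauchy–Schwarz,
the parallelogram law and polarization give `ω_A(T) ≤ ‖T‖_A ≤ 2 ω_A(T)`.

`r_A(T) ≤ ω_A(T)`: comparing `⟨T a, a⟩_A` at `a = r x ± u T x` and taking the discriminant in `r`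
gives `ω_A(T²) ≤ ω_A(T)²`, hence `‖T^(2^k)‖_A ≤ 2 ω_A(T)^(2^k)`; take `2^k`-th roots.

`ω_A(T) = ‖T‖_A ⟹ r_A(T) = ‖T‖_A`: an `A`-unit vector `x` with `μ = ⟨Tx, x⟩_A` satisfies
`‖Tx - μx‖_A² ≤ ‖T‖_A² - |μ|²`, so when `|μ| → ‖T‖_A` it is an approximate eigenvector, and then
`‖Tⁿx - μⁿx‖_A ≤ n ‖T‖_A^(n-1) ‖Tx - μx‖_A` forces `‖Tⁿ‖_A ≥ ‖T‖_A^n`.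
-/

open scoped InnerProductSpace

lemma Complex.exists_norm_eq_one_sq_mul_norm (z : ℂ) : ∃ u : ℂ, ‖u‖ = 1 ∧ u ^ 2 * ‖z‖ = z := by
  refine ⟨Complex.exp (↑(z.arg / 2) * Complex.I), Complex.norm_exp_ofReal_mul_I _, ?_⟩
  conv_rhs => rw [← Complex.norm_mul_exp_arg_mul_I z]
  rw [← Complex.exp_nat_mul]
  push_cast
  ring_nf

lemma norm_sub_inner_smul_sq {E : Type*} [NormedAddCommGroup E] [InnerProductSpace ℂ E]
    {w : E} (hw : ‖w‖ = 1) (v : E) :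
    ‖v - ⟪w, v⟫_ℂ • w‖ ^ 2 = ‖v‖ ^ 2 - ‖⟪w, v⟫_ℂ‖ ^ 2 := by
  rw [@norm_sub_sq ℂ, inner_smul_right, ← inner_conj_symm v w, Complex.mul_conj', norm_smul, hw,
    mul_one, RCLike.re_to_complex, ← Complex.ofReal_pow, Complex.ofReal_re]
  ring

section Basic

variable {A S T : H →L[ℂ] H}

omit [CompleteSpace H]

lemma anorm_nonneg (x : H) : 0 ≤ anorm A x := Real.sqrt_nonneg _

lemma ABounded.anorm_apply_eq_zero (hT : ABounded A T) {x : H} (hx : anorm A x = 0) :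
    anorm A (T x) = 0 := by
  obtain ⟨c, -, hc⟩ := hT
  exact le_antisymm (by simpa [hx] using hc x) (anorm_nonneg _)

lemma ABounded.mul (hS : ABounded A S) (hT : ABounded A T) : ABounded A (S * T) := by
  obtain ⟨c, hc, hSc⟩ := hS
  obtain ⟨d, hd, hTd⟩ := hT
  refine ⟨c * d, mul_pos hc hd, fun x => ?_⟩
  calc anorm A (S (T x)) ≤ c * anorm A (T x) := hSc _
    _ ≤ c * (d * anorm A x) := by gcongr; exact hTd x
    _ = c * d * anorm A x := by ring

lemma ABounded.pow (hT : ABounded A T) (n : ℕ) : ABounded A (T ^ n) := by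
  induction n with
  | zero => exact ⟨1, one_pos, fun x => by simp⟩
  | succ n ih => rw [pow_succ]; exact ih.mul hT

lemma ABounded.bddAbove_anorm_apply (hT : ABounded A T) :
    BddAbove {c : ℝ | ∃ x : H, anorm A x = 1 ∧ c = anorm A (T x)} := by
  obtain ⟨c, -, hc⟩ := hT
  refine ⟨c, ?_⟩
  rintro _ ⟨x, hx, rfl⟩
  simpa [hx] using hc x

lemma opAnorm_nonneg : 0 ≤ opAnorm A T :=
  Real.sSup_nonneg <| by rintro _ ⟨x, -, rfl⟩; exact anorm_nonneg _

lemma opAnorm_le_of_forall {M : ℝ} (hM : 0 ≤ M)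
    (h : ∀ x : H, anorm A x = 1 → anorm A (T x) ≤ M) : opAnorm A T ≤ M :=
  Real.sSup_le (by rintro _ ⟨x, hx, rfl⟩; exact h x hx) hM

lemma wA_nonneg : 0 ≤ wA A T :=
  Real.sSup_nonneg <| by rintro _ ⟨x, -, rfl⟩; exact norm_nonneg _

lemma wA_le_of_forall {M : ℝ} (hM : 0 ≤ M)
    (h : ∀ x : H, anorm A x = 1 → ‖⟪A (T x), x⟫_ℂ‖ ≤ M) : wA A T ≤ M :=
  Real.sSup_le (by rintro _ ⟨x, hx, rfl⟩; exact h x hx) hM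

lemma rA_le_opAnorm_pow_rpow (n : ℕ+) :
    rA A T ≤ opAnorm A (T ^ (n : ℕ)) ^ (((n : ℕ) : ℝ)⁻¹) :=
  ciInf_le ⟨0, by rintro _ ⟨m, rfl⟩; exact Real.rpow_nonneg opAnorm_nonneg _⟩ n

lemma rA_le_opAnorm : rA A T ≤ opAnorm A T := by
  simpa using rA_le_opAnorm_pow_rpow (A := A) (T := T) 1

lemma le_rA_of_forall_pow_le {N : ℝ} (hN : 0 ≤ N)
    (h : ∀ n : ℕ, 0 < n → N ^ n ≤ opAnorm A (T ^ n)) : N ≤ rA A T := by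
  refine le_ciInf fun n => ?_
  calc N = (N ^ (n : ℕ)) ^ (((n : ℕ) : ℝ)⁻¹) := by
        rw [Real.pow_rpow_inv_natCast hN n.ne_zero]
    _ ≤ opAnorm A (T ^ (n : ℕ)) ^ (((n : ℕ) : ℝ)⁻¹) := by
        gcongr
        exact h n n.pos

end Basic

section Seminorm

variable {A : H →L[ℂ] H} (hA : A.IsPositive)
include hA

lemma inner_apply_eq_inner_sqrt (x y : H) :
    ⟪A x, y⟫_ℂ = ⟪CFC.sqrt A x, CFC.sqrt A y⟫_ℂ := by
  have hR : (CFC.sqrt A).IsPositive :=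
    (ContinuousLinearMap.nonneg_iff_isPositive _).mp (CFC.sqrt_nonneg A)
  conv_lhs => rw [← CFC.sqrt_mul_sqrt_self A ((ContinuousLinearMap.nonneg_iff_isPositive A).mpr hA),
    mul_apply_eq_comp]
  exact hR.inner_left_eq_inner_right _ _

lemma anorm_eq_norm_sqrt (x : H) : anorm A x = ‖CFC.sqrt A x‖ := by
  rw [anorm, inner_apply_eq_inner_sqrt hA, inner_self_eq_norm_sq_to_K]
  norm_cast
  exact Real.sqrt_sq (norm_nonneg _)

lemma inner_apply_self_eq_anorm_sq (x : H) : ⟪A x, x⟫_ℂ = ((anorm A x ^ 2 : ℝ) : ℂ) := by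
  rw [inner_apply_eq_inner_sqrt hA, anorm_eq_norm_sqrt hA, inner_self_eq_norm_sq_to_K]
  norm_cast

lemma norm_inner_apply_le_anorm_mul (x y : H) : ‖⟪A x, y⟫_ℂ‖ ≤ anorm A x * anorm A y := by
  rw [inner_apply_eq_inner_sqrt hA, anorm_eq_norm_sqrt hA, anorm_eq_norm_sqrt hA]
  exact norm_inner_le_norm _ _

lemma anorm_smul (c : ℂ) (x : H) : anorm A (c • x) = ‖c‖ * anorm A x := by
  simp only [anorm_eq_norm_sqrt hA, map_smul, norm_smul]

lemma anorm_add_le (x y : H) : anorm A (x + y) ≤ anorm A x + anorm A y := by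
  simp only [anorm_eq_norm_sqrt hA, map_add]
  exact norm_add_le _ _

lemma anorm_sub_le (x y : H) : anorm A (x - y) ≤ anorm A x + anorm A y := by
  simp only [anorm_eq_norm_sqrt hA, map_sub]
  exact norm_sub_le _ _

lemma anorm_add_sq_add_anorm_sub_sq (x y : H) :
    anorm A (x + y) ^ 2 + anorm A (x - y) ^ 2 = 2 * (anorm A x ^ 2 + anorm A y ^ 2) := by
  simp only [anorm_eq_norm_sqrt hA, map_add, map_sub]
  have := parallelogram_law_with_norm ℂ (CFC.sqrt A x) (CFC.sqrt A y)
  linarith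

lemma exists_anorm_eq_one_smul {x : H} (hx : anorm A x ≠ 0) :
    ∃ (a : ℝ) (u : H), 0 ≤ a ∧ anorm A u = 1 ∧ x = (a : ℂ) • u := by
  refine ⟨anorm A x, ((anorm A x)⁻¹ : ℂ) • x, anorm_nonneg x, ?_, ?_⟩
  · rw [anorm_smul hA, norm_inv, Complex.norm_real, Real.norm_of_nonneg (anorm_nonneg x),
      inv_mul_cancel₀ hx]
  · rw [smul_smul, mul_inv_cancel₀ (by exact_mod_cast hx), one_smul]

end Seminorm

section Operator

variable {A T : H →L[ℂ] H} (hA : A.IsPositive)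
include hA

lemma ABounded.bddAbove_norm_inner (hT : ABounded A T) :
    BddAbove {c : ℝ | ∃ x : H, anorm A x = 1 ∧ c = ‖⟪A (T x), x⟫_ℂ‖} := by
  obtain ⟨c, hc⟩ := hT.bddAbove_anorm_apply
  refine ⟨c, ?_⟩
  rintro _ ⟨x, hx, rfl⟩
  calc ‖⟪A (T x), x⟫_ℂ‖ ≤ anorm A (T x) * anorm A x := norm_inner_apply_le_anorm_mul hA _ _
    _ ≤ c := by rw [hx, mul_one]; exact hc ⟨x, hx, rfl⟩

lemma anorm_apply_le_opAnorm_mul (hT : ABounded A T) (x : H) :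
    anorm A (T x) ≤ opAnorm A T * anorm A x := by
  by_cases hx : anorm A x = 0
  · rw [hx, mul_zero, hT.anorm_apply_eq_zero hx]
  obtain ⟨a, u, ha, hu, rfl⟩ := exists_anorm_eq_one_smul hA hx
  have hTu : anorm A (T u) ≤ opAnorm A T := le_csSup hT.bddAbove_anorm_apply ⟨u, hu, rfl⟩
  rw [map_smul, anorm_smul hA, anorm_smul hA, hu, Complex.norm_real, Real.norm_of_nonneg ha]
  nlinarith

lemma norm_inner_le_wA_mul (hT : ABounded A T) (x : H) :
    ‖⟪A (T x), x⟫_ℂ‖ ≤ wA A T * anorm A x ^ 2 := by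
  by_cases hx : anorm A x = 0
  · simpa [hx] using norm_inner_apply_le_anorm_mul hA (T x) x
  obtain ⟨a, u, ha, hu, rfl⟩ := exists_anorm_eq_one_smul hA hx
  have hTu : ‖⟪A (T u), u⟫_ℂ‖ ≤ wA A T := le_csSup (hT.bddAbove_norm_inner hA) ⟨u, hu, rfl⟩
  rw [map_smul, map_smul, inner_smul_left, inner_smul_right, norm_mul, norm_mul,
    Complex.norm_conj, anorm_smul hA, hu, Complex.norm_real, Real.norm_of_nonneg ha]
  nlinarith [mul_nonneg ha ha]

lemma wA_le_opAnorm (hT : ABounded A T) : wA A T ≤ opAnorm A T := by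
  refine wA_le_of_forall opAnorm_nonneg fun x hx => ?_
  calc ‖⟪A (T x), x⟫_ℂ‖ ≤ anorm A (T x) * anorm A x := norm_inner_apply_le_anorm_mul hA _ _
    _ ≤ opAnorm A T := by simpa [hx] using anorm_apply_le_opAnorm_mul hA hT x

lemma norm_inner_le_wA_mul_add (hT : ABounded A T) (x y : H) :
    ‖⟪A (T y), x⟫_ℂ‖ ≤ wA A T * (anorm A x ^ 2 + anorm A y ^ 2) := by
  have hpol := inner_map_polarization ((A * T : H →L[ℂ] H) : H →ₗ[ℂ] H) x y
  simp only [ContinuousLinearMap.coe_coe, mul_apply_eq_comp] at hpol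
  have hq := norm_inner_le_wA_mul hA hT
  have h1 := anorm_add_sq_add_anorm_sub_sq hA x y
  have h2 := anorm_add_sq_add_anorm_sub_sq hA x (Complex.I • y)
  rw [anorm_smul hA, Complex.norm_I, one_mul] at h2
  rw [hpol, norm_div, Complex.norm_ofNat, div_le_iff₀ four_pos]
  refine (norm_sub_le _ _).trans ?_
  grw [norm_add_le, norm_sub_le, norm_mul, norm_mul, Complex.norm_I, hq, hq, hq, hq]
  linear_combination wA A T * (h1 + h2)

lemma opAnorm_le_two_mul_wA (hT : ABounded A T) : opAnorm A T ≤ 2 * wA A T := by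
  refine opAnorm_le_of_forall (mul_nonneg zero_le_two wA_nonneg) fun y hy => ?_
  by_cases hTy : anorm A (T y) = 0
  · rw [hTy]; exact mul_nonneg zero_le_two wA_nonneg
  obtain ⟨a, u, ha, hu, hTyu⟩ := exists_anorm_eq_one_smul hA hTy
  have hinner : ⟪A (T y), u⟫_ℂ = a := by
    rw [hTyu, map_smul, inner_smul_left, Complex.conj_ofReal, inner_apply_self_eq_anorm_sq hA,
      hu]
    simp
  have := norm_inner_le_wA_mul_add hA hT u y
  rw [hinner, Complex.norm_real, Real.norm_of_nonneg ha, hu, hy] at this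
  rw [hTyu, anorm_smul hA, hu, Complex.norm_real, Real.norm_of_nonneg ha]
  linarith

end Operator

section PowerInequality

variable {A T : H →L[ℂ] H} (hA : A.IsPositive)
include hA

lemma mul_anorm_sq_add_norm_inner_le_wA_mul (hT : ABounded A T) {x : H} (hx : anorm A x = 1)
    {u : ℂ} (hu : ‖u‖ = 1) (huζ : u ^ 2 * ‖⟪A (T (T x)), x⟫_ℂ‖ = ⟪A (T (T x)), x⟫_ℂ) (r : ℝ) :
    r * (anorm A (T x) ^ 2 + ‖⟪A (T (T x)), x⟫_ℂ‖) ≤ wA A T * (r ^ 2 + anorm A (T x) ^ 2) := by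
  set ζ := ⟪A (T (T x)), x⟫_ℂ
  set t := anorm A (T x)
  set a := (r : ℂ) • x + u • T x
  set b := (r : ℂ) • x - u • T x
  have hconj : (starRingEnd ℂ) u * u = 1 := by
    rw [Complex.conj_mul', hu]; norm_num
  -- the choice of `u` makes `conj u * ζ = u * ‖ζ‖`, so both terms of the difference are parallel
  have hdiff : ⟪A (T a), a⟫_ℂ - ⟪A (T b), b⟫_ℂ = 2 * r * u * (t ^ 2 + ‖ζ‖ : ℝ) := by
    simp only [a, b, map_add, map_sub, map_smul, inner_add_left, inner_add_right,
      inner_sub_left, inner_sub_right, inner_smul_left, inner_smul_right, Complex.conj_ofReal,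
      inner_apply_self_eq_anorm_sq hA (T x)]
    push_cast
    linear_combination (-2 * r * (starRingEnd ℂ) u) * huζ + (2 * r * u * ‖ζ‖) * hconj
  have hab : anorm A a ^ 2 + anorm A b ^ 2 = 2 * (r ^ 2 + t ^ 2) := by
    rw [anorm_add_sq_add_anorm_sub_sq hA, anorm_smul hA, anorm_smul hA, hx, hu,
      Complex.norm_real, Real.norm_eq_abs, mul_one, one_mul, sq_abs]
  have hnorm : ‖⟪A (T a), a⟫_ℂ - ⟪A (T b), b⟫_ℂ‖ = 2 * |r| * (t ^ 2 + ‖ζ‖) := by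
    rw [hdiff, norm_mul, norm_mul, norm_mul, hu, Complex.norm_real, Complex.norm_real,
      Complex.norm_ofNat, Real.norm_eq_abs, Real.norm_eq_abs,
      abs_of_nonneg (by positivity : (0 : ℝ) ≤ t ^ 2 + ‖ζ‖), mul_one]
  have := calc 2 * (r * (t ^ 2 + ‖ζ‖))
      ≤ 2 * |r| * (t ^ 2 + ‖ζ‖) := by nlinarith [le_abs_self r, norm_nonneg ζ]
    _ ≤ ‖⟪A (T a), a⟫_ℂ‖ + ‖⟪A (T b), b⟫_ℂ‖ := hnorm ▸ norm_sub_le _ _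
    _ ≤ wA A T * anorm A a ^ 2 + wA A T * anorm A b ^ 2 :=
      add_le_add (norm_inner_le_wA_mul hA hT a) (norm_inner_le_wA_mul hA hT b)
    _ = 2 * (wA A T * (r ^ 2 + t ^ 2)) := by rw [← mul_add, hab]; ring
  linarith

lemma norm_inner_apply_apply_le_wA_sq (hT : ABounded A T) {x : H} (hx : anorm A x = 1) :
    ‖⟪A (T (T x)), x⟫_ℂ‖ ≤ wA A T ^ 2 := by
  set ζ := ⟪A (T (T x)), x⟫_ℂ
  set t := anorm A (T x)
  set ω := wA A T
  obtain ⟨u, hu, huζ⟩ := Complex.exists_norm_eq_one_sq_mul_norm ζ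
  have hdisc := discrim_le_zero (a := ω) (b := -(t ^ 2 + ‖ζ‖)) (c := ω * t ^ 2) fun r => by
    nlinarith [mul_anorm_sq_add_norm_inner_le_wA_mul hA hT hx hu huζ r]
  have hsq : (t ^ 2 + ‖ζ‖) ^ 2 ≤ (2 * ω * t) ^ 2 := by rw [discrim] at hdisc; nlinarith
  have hle : t ^ 2 + ‖ζ‖ ≤ 2 * ω * t := (sq_le_sq₀ (by positivity)
    (mul_nonneg (mul_nonneg zero_le_two wA_nonneg) (anorm_nonneg _))).mp hsq
  nlinarith [sq_nonneg (ω - t)]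

lemma wA_mul_self_le (hT : ABounded A T) : wA A (T * T) ≤ wA A T ^ 2 :=
  wA_le_of_forall (sq_nonneg _) fun _ hx => norm_inner_apply_apply_le_wA_sq hA hT hx

lemma wA_pow_two_pow_le (hT : ABounded A T) (k : ℕ) :
    wA A (T ^ 2 ^ k) ≤ wA A T ^ 2 ^ k := by
  induction k with
  | zero => simp
  | succ k ih =>
    rw [pow_succ, pow_mul, sq, pow_mul, sq]
    calc wA A (T ^ 2 ^ k * T ^ 2 ^ k) ≤ wA A (T ^ 2 ^ k) ^ 2 := wA_mul_self_le hA (hT.pow _)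
      _ ≤ (wA A T ^ 2 ^ k) ^ 2 := by gcongr; exact wA_nonneg
      _ = wA A T ^ 2 ^ k * wA A T ^ 2 ^ k := sq _

lemma rA_le_wA (hT : ABounded A T) : rA A T ≤ wA A T := by
  have hbound : ∀ k : ℕ, rA A T ≤ (2 : ℝ) ^ ((2 : ℝ) ^ k)⁻¹ * wA A T := by
    intro k
    have h2k : ((2 ^ k : ℕ) : ℝ) = (2 : ℝ) ^ k := by push_cast; ring
    calc rA A T ≤ opAnorm A (T ^ 2 ^ k) ^ ((2 : ℝ) ^ k)⁻¹ := by
          simpa [h2k] using rA_le_opAnorm_pow_rpow (A := A) (T := T) ⟨2 ^ k, by positivity⟩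
      _ ≤ (2 * wA A T ^ 2 ^ k) ^ ((2 : ℝ) ^ k)⁻¹ := by
          gcongr
          · exact opAnorm_nonneg
          · exact (opAnorm_le_two_mul_wA hA (hT.pow _)).trans
              (by gcongr; exact wA_pow_two_pow_le hA hT k)
      _ = (2 : ℝ) ^ ((2 : ℝ) ^ k)⁻¹ * wA A T := by
          rw [Real.mul_rpow zero_le_two (pow_nonneg wA_nonneg _), ← h2k,
            Real.pow_rpow_inv_natCast wA_nonneg (by positivity)]
  have hlim : Tendsto (fun k : ℕ => (2 : ℝ) ^ ((2 : ℝ) ^ k)⁻¹ * wA A T) atTop (nhds (wA A T)) := by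
    have hexp : Tendsto (fun k : ℕ => ((2 : ℝ) ^ k)⁻¹) atTop (nhds 0) :=
      tendsto_inv_atTop_zero.comp (tendsto_pow_atTop_atTop_of_one_lt one_lt_two)
    simpa using ((tendsto_const_nhds (x := (2 : ℝ))).rpow hexp (Or.inl two_ne_zero)).mul_const
      (wA A T)
  exact ge_of_tendsto' hlim hbound

end PowerInequality

section Normaloid

variable {A T : H →L[ℂ] H} (hA : A.IsPositive)
include hA

lemma anorm_apply_sub_inner_smul_sq_le (hT : ABounded A T) {x : H} (hx : anorm A x = 1) :
    anorm A (T x - ⟪A x, T x⟫_ℂ • x) ^ 2 ≤ opAnorm A T ^ 2 - ‖⟪A (T x), x⟫_ℂ‖ ^ 2 := by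
  have hTx : anorm A (T x) ≤ opAnorm A T := by
    simpa [hx] using anorm_apply_le_opAnorm_mul hA hT x
  rw [anorm_eq_norm_sqrt hA] at hx hTx ⊢
  rw [inner_apply_eq_inner_sqrt hA, inner_apply_eq_inner_sqrt hA, map_sub, map_smul,
    norm_sub_inner_smul_sq hx, norm_inner_symm]
  gcongr

lemma anorm_pow_succ_apply_sub_le (hT : ABounded A T) {μ : ℂ} (hμ : ‖μ‖ ≤ opAnorm A T)
    (x : H) (n : ℕ) :
    anorm A ((T ^ (n + 1)) x - μ ^ (n + 1) • x) ≤
      (n + 1) * opAnorm A T ^ n * anorm A (T x - μ • x) := by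
  induction n with
  | zero => simp
  | succ n ih =>
    have hsplit : (T ^ (n + 2)) x - μ ^ (n + 2) • x =
        T ((T ^ (n + 1)) x - μ ^ (n + 1) • x) + μ ^ (n + 1) • (T x - μ • x) := by
      rw [pow_succ' T, mul_apply_eq_comp, map_sub, map_smul, smul_sub, smul_smul, ← pow_succ]
      abel
    set N := opAnorm A T
    set d := anorm A (T x - μ • x)
    have hμn : ‖μ‖ ^ (n + 1) ≤ N ^ (n + 1) := by gcongr
    calc anorm A ((T ^ (n + 2)) x - μ ^ (n + 2) • x)
        ≤ N * anorm A ((T ^ (n + 1)) x - μ ^ (n + 1) • x) + ‖μ‖ ^ (n + 1) * d := by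
          rw [hsplit, ← norm_pow, ← anorm_smul hA]
          exact (anorm_add_le hA _ _).trans (by grw [anorm_apply_le_opAnorm_mul hA hT])
      _ ≤ N * ((n + 1) * N ^ n * d) + N ^ (n + 1) * d := by
          gcongr
          · exact opAnorm_nonneg
          · exact anorm_nonneg _
      _ = (↑(n + 1) + 1) * N ^ (n + 1) * d := by push_cast; ring

lemma norm_inner_pow_sub_le_opAnorm_pow (hT : ABounded A T) {x : H} (hx : anorm A x = 1)
    (n : ℕ) :
    ‖⟪A (T x), x⟫_ℂ‖ ^ (n + 1) - (n + 1) * opAnorm A T ^ n *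
        √(opAnorm A T ^ 2 - ‖⟪A (T x), x⟫_ℂ‖ ^ 2) ≤ opAnorm A (T ^ (n + 1)) := by
  set μ := ⟪A x, T x⟫_ℂ
  have hμ : ‖⟪A (T x), x⟫_ℂ‖ = ‖μ‖ := by
    rw [hA.inner_left_eq_inner_right, norm_inner_symm]
  have hμN : ‖μ‖ ≤ opAnorm A T :=
    hμ ▸ (norm_inner_le_wA_mul hA hT x).trans (by simpa [hx] using wA_le_opAnorm hA hT)
  have hd : anorm A (T x - μ • x) ≤ √(opAnorm A T ^ 2 - ‖⟪A (T x), x⟫_ℂ‖ ^ 2) :=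
    Real.le_sqrt_of_sq_le (anorm_apply_sub_inner_smul_sq_le hA hT hx)
  have hTn : anorm A ((T ^ (n + 1)) x) ≤ opAnorm A (T ^ (n + 1)) := by
    simpa [hx] using anorm_apply_le_opAnorm_mul hA (hT.pow (n + 1)) x
  have hμx : ‖μ‖ ^ (n + 1) ≤
      anorm A ((T ^ (n + 1)) x) + anorm A ((T ^ (n + 1)) x - μ ^ (n + 1) • x) := by
    calc ‖μ‖ ^ (n + 1) = anorm A (μ ^ (n + 1) • x) := by rw [anorm_smul hA, hx, norm_pow, mul_one]
      _ = anorm A ((T ^ (n + 1)) x - ((T ^ (n + 1)) x - μ ^ (n + 1) • x)) := by rw [sub_sub_cancel]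
      _ ≤ _ := anorm_sub_le hA _ _
  have herr := (anorm_pow_succ_apply_sub_le hA hT hμN x n).trans
    (mul_le_mul_of_nonneg_left hd (by positivity [opAnorm_nonneg (A := A) (T := T)]))
  rw [hμ] at herr ⊢
  linarith

lemma opAnorm_pow_le_opAnorm_pow_of_wA_eq (hT : ABounded A T) (h : wA A T = opAnorm A T)
    (n : ℕ) : opAnorm A T ^ (n + 1) ≤ opAnorm A (T ^ (n + 1)) := by
  set N := opAnorm A T
  rcases (opAnorm_nonneg : 0 ≤ N).eq_or_lt with hN | hN
  · rw [show N = 0 from hN.symm, zero_pow n.succ_ne_zero]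
    exact opAnorm_nonneg
  have hne : {c : ℝ | ∃ x : H, anorm A x = 1 ∧ c = ‖⟪A (T x), x⟫_ℂ‖}.Nonempty := by
    by_contra hS
    rw [Set.not_nonempty_iff_eq_empty] at hS
    rw [wA, hS, Real.sSup_empty] at h
    linarith
  obtain ⟨m, -, hm, hmS⟩ := exists_seq_tendsto_sSup hne (hT.bddAbove_norm_inner hA)
  set f : ℝ → ℝ := fun c => c ^ (n + 1) - (n + 1) * N ^ n * √(N ^ 2 - c ^ 2)
  have hf : Tendsto (f ∘ m) atTop (nhds (N ^ (n + 1))) := by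
    have hfc : Continuous f := by fun_prop
    simpa [f] using (hfc.tendsto N).comp (h ▸ hm)
  refine le_of_tendsto' hf fun k => ?_
  obtain ⟨x, hx, hmk⟩ := hmS k
  simpa [f, hmk] using norm_inner_pow_sub_le_opAnorm_pow hA hT hx n

lemma opAnorm_le_rA_of_wA_eq (hT : ABounded A T) (h : wA A T = opAnorm A T) :
    opAnorm A T ≤ rA A T := by
  refine le_rA_of_forall_pow_le (opAnorm_nonneg (A := A)) fun n hn => ?_
  obtain ⟨m, rfl⟩ := Nat.exists_eq_add_one_of_ne_zero hn.ne'
  exact opAnorm_pow_le_opAnorm_pow_of_wA_eq hA hT h m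

end Normaloid

theorem stmt_11_general (A T : H →L[ℂ] H) (hA : A.IsPositive)
    (hT : ABounded A T) :
    (rA A T = opAnorm A T ↔ wA A T = opAnorm A T) ∧
      (rA A T = opAnorm A T → rA A T = wA A T ∧ wA A T = opAnorm A T) := by
  have hiff : rA A T = opAnorm A T ↔ wA A T = opAnorm A T :=
    ⟨fun h => le_antisymm (wA_le_opAnorm hA hT) (h.symm.le.trans (rA_le_wA hA hT)),
      fun h => le_antisymm rA_le_opAnorm (opAnorm_le_rA_of_wA_eq hA hT h)⟩
  exact ⟨hiff, fun h => ⟨h.trans (hiff.mp h).symm, hiff.mp h⟩⟩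

theorem stmt_11 (A T : H →L[ℂ] H) (hA : A.IsPositive) (hA0 : A ≠ 0)
    (hT : ABounded A T) :
    (rA A T = opAnorm A T ↔ wA A T = opAnorm A T) ∧
      (rA A T = opAnorm A T → rA A T = wA A T ∧ wA A T = opAnorm A T) :=
  stmt_11_general A T hA hT
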